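/- Fix an integer D ≥ 2, real numbers α > 0 and p ∈ (1,2), and k ∈ ℕ₀, and let ε̲, ε̄ and r₀ ∈ (1, min{p, D/(D−1)}) (the unique solution of ε̄(r₀) = ε̲(r₀)) be as in the context. Then for every r ∈ (1, r₀) and every ϵ ∈ (ε̲(r), ε̄(r)), setting r' = r/(r−1), ζ = (α/(2+α))·ϵ, ε = (2/(D+1))·(1 − ((2+3α)/(4+2α))·ϵ), and σ = ((A − D̂)·ϵ + E)/(B + C) with A = (2(r−1)/r)·(α/(2+α)), B = (2(r−1)/r)·(1−p/2), C = p/r − 1, D̂ = (2(D−1)/(r'(D+1)))·((2+3α)/(4+2α)), E = 2(D−1)/(r'(D+1)), all of ζ, ε, σ are strictly positive and the following seven quantities are strictly positive: (i) ϵα/2 − ζα/2 − σ(1−p/2); (ii) ζ − σ(1−p/2); (iii) 1 − ε(D+1)/2 − ϵ/2 − σ(1−p/2); (iv) σ(p/r − 1) − ε(D−1)/r'; (v) ε(1 − (D−1)/r') − ϵ/2; (vi) 1 − ϵ/2 − ε(D/r' + 1/r); (vii) 1 − ϵ(D + (k+1)/2) − D/r'. -/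

import Mathlib

/-- The lower threshold `ε̲(r)` from the parameter analysis. -/
noncomputable def elow (D : ℕ) (α p r : ℝ) : ℝ :=
  (4 + 2 * α) * (2 - p) * ((D : ℝ) - 1) * (r - 1) /
    (2 * α * ((D : ℝ) + 1) * (p - r) + (2 + 3 * α) * (2 - p) * ((D : ℝ) - 1) * (r - 1))

/-- The upper threshold `ε̄₁(r)`. -/
noncomputable def ebar1 (D : ℕ) (α r : ℝ) : ℝ :=
  (8 + 4 * α) /
    (4 + 6 * α + (2 + α) * ((D : ℝ) + 1) * r / ((D : ℝ) - 1 - ((D : ℝ) - 2) * r))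

/-- The upper threshold `ε̄₂(r)`. -/
noncomputable def ebar2 (D : ℕ) (k : ℕ) (r : ℝ) : ℝ :=
  ((D : ℝ) - ((D : ℝ) - 1) * r) / (((D : ℝ) + ((k : ℝ) + 1) / 2) * r)

/-- The upper threshold `ε̄(r) = min {ε̄₁(r), ε̄₂(r)}`. -/
noncomputable def ebar (D : ℕ) (α : ℝ) (k : ℕ) (r : ℝ) : ℝ :=
  min (ebar1 D α r) (ebar2 D k r)

/-- The conjugate exponent `r' = r/(r-1)`. -/
noncomputable def rprime (r : ℝ) : ℝ := r / (r - 1)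

/-- The parameter `ζ = (α/(2+α))·ϵ`. -/
noncomputable def zetaP (α ϵ : ℝ) : ℝ := α / (2 + α) * ϵ

/-- The parameter `ε = (2/(D+1))·(1 - ((2+3α)/(4+2α))·ϵ)`. -/
noncomputable def epsP (D : ℕ) (α ϵ : ℝ) : ℝ :=
  2 / ((D : ℝ) + 1) * (1 - (2 + 3 * α) / (4 + 2 * α) * ϵ)

/-- `A = (2(r-1)/r)·(α/(2+α))`. -/
noncomputable def AP (α r : ℝ) : ℝ := 2 * (r - 1) / r * (α / (2 + α))

/-- `B = (2(r-1)/r)·(1-p/2)`. -/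
noncomputable def BP (p r : ℝ) : ℝ := 2 * (r - 1) / r * (1 - p / 2)

/-- `C = p/r - 1`. -/
noncomputable def CP (p r : ℝ) : ℝ := p / r - 1

/-- `D̂ = (2(D-1)/(r'(D+1)))·((2+3α)/(4+2α))`. -/
noncomputable def DP (D : ℕ) (α r : ℝ) : ℝ :=
  2 * ((D : ℝ) - 1) / (rprime r * ((D : ℝ) + 1)) * ((2 + 3 * α) / (4 + 2 * α))

/-- `E = 2(D-1)/(r'(D+1))`. -/
noncomputable def EP (D : ℕ) (r : ℝ) : ℝ :=
  2 * ((D : ℝ) - 1) / (rprime r * ((D : ℝ) + 1))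

/-- The parameter `σ = ((A - D̂)·ϵ + E)/(B + C)`. -/
noncomputable def sigmaP (D : ℕ) (α p r ϵ : ℝ) : ℝ :=
  ((AP α r - DP D α r) * ϵ + EP D r) / (BP p r + CP p r)

/-!
Write Δ = ζ − σ(1 − p/2). Quantities (i), (ii), (iii) all equal Δ, and (iv) equals
(2(r − 1)/r)·Δ. Since σ(B + C) = (A − D̂)ϵ + E, one has
(B + C)·Δ = ζ(p/r − 1) − (1 − p/2)·ε(D − 1)/r', and after clearing denominators this is
positive exactly when ϵ > ε̲(r). In the same way (v) is ϵ < ε̄₁(r) and (vii) is ϵ < ε̄₂(r) with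
denominators cleared; (v) forces ε > 0, and (vi) = ζ + ε(D − 1)(2 − r)/(2r).
-/

lemma inv_rprime (r : ℝ) : (rprime r)⁻¹ = (r - 1) / r := inv_div r (r - 1)

lemma rprime_pos {r : ℝ} (hr : 1 < r) : 0 < rprime r := div_pos (by linarith) (by linarith)

lemma one_sub_div_rprime (D : ℕ) {r : ℝ} (hr : r ≠ 0) :
    1 - ((D : ℝ) - 1) / rprime r = ((D : ℝ) - 1 - ((D : ℝ) - 2) * r) / r := by
  rw [div_eq_mul_inv _ (rprime r), inv_rprime]
  field_simp
  ring

lemma epsP_mul_div_rprime (D : ℕ) (α r ϵ : ℝ) :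
    epsP D α ϵ * ((D : ℝ) - 1) / rprime r = EP D r - DP D α r * ϵ := by
  simp only [epsP, EP, DP, div_eq_mul_inv, mul_inv, inv_rprime]
  ring

lemma AP_sub_DP_mul_add_EP (D : ℕ) (α r ϵ : ℝ) :
    (AP α r - DP D α r) * ϵ + EP D r =
      2 * (r - 1) / r * zetaP α ϵ + epsP D α ϵ * ((D : ℝ) - 1) / rprime r := by
  rw [epsP_mul_div_rprime, AP, zetaP]
  ring

lemma BP_add_CP_pos {p r : ℝ} (hr : 1 < r) (hrp : r < p) (hp : p ≤ 2) : 0 < BP p r + CP p r := by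
  have hB : 0 ≤ BP p r := mul_nonneg (div_nonneg (by linarith) (by linarith)) (by linarith)
  have hC : 0 < CP p r := sub_pos.2 ((one_lt_div (by linarith)).2 hrp)
  exact add_pos_of_nonneg_of_pos hB hC

lemma sigmaP_pos (D : ℕ) {α p r ϵ : ℝ} (hD : 1 ≤ D) (hr : 1 < r) (hrp : r < p) (hp : p ≤ 2)
    (hζ : 0 < zetaP α ϵ) (hε : 0 ≤ epsP D α ϵ) : 0 < sigmaP D α p r ϵ := by
  have hD' : (0 : ℝ) ≤ (D : ℝ) - 1 := sub_nonneg.2 (by exact_mod_cast hD)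
  have hr' := rprime_pos hr
  refine div_pos ?_ (BP_add_CP_pos hr hrp hp)
  rw [AP_sub_DP_mul_add_EP]
  exact add_pos_of_pos_of_nonneg (mul_pos (div_pos (by linarith) (by linarith)) hζ) (by positivity)

lemma sigmaP_mul_BP_add_CP (D : ℕ) (α : ℝ) {p r : ℝ} (ϵ : ℝ) (h : BP p r + CP p r ≠ 0) :
    sigmaP D α p r ϵ * (BP p r + CP p r) =
      2 * (r - 1) / r * zetaP α ϵ + epsP D α ϵ * ((D : ℝ) - 1) / rprime r := by
  rw [sigmaP, div_mul_cancel₀ _ h, AP_sub_DP_mul_add_EP]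

lemma BP_add_CP_mul_sub (D : ℕ) (α : ℝ) {p r : ℝ} (ϵ : ℝ) (h : BP p r + CP p r ≠ 0) :
    (BP p r + CP p r) * (zetaP α ϵ - sigmaP D α p r ϵ * (1 - p / 2)) =
      zetaP α ϵ * (p / r - 1) - (1 - p / 2) * (epsP D α ϵ * ((D : ℝ) - 1) / rprime r) := by
  have hσ := sigmaP_mul_BP_add_CP D α ϵ h
  simp only [BP, CP] at hσ ⊢
  linear_combination (p / 2 - 1) * hσ

lemma sigmaP_mul_CP_sub (D : ℕ) (α : ℝ) {p r : ℝ} (ϵ : ℝ) (h : BP p r + CP p r ≠ 0) :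
    sigmaP D α p r ϵ * (p / r - 1) - epsP D α ϵ * ((D : ℝ) - 1) / rprime r =
      2 * (r - 1) / r * (zetaP α ϵ - sigmaP D α p r ϵ * (1 - p / 2)) := by
  have hσ := sigmaP_mul_BP_add_CP D α ϵ h
  simp only [BP, CP] at hσ
  linear_combination hσ

lemma mul_div_two_sub_zetaP_mul_div_two {α : ℝ} (hα : 2 + α ≠ 0) (ϵ : ℝ) :
    ϵ * α / 2 - zetaP α ϵ * α / 2 = zetaP α ϵ := by
  simp only [zetaP]
  field_simp
  ring

lemma one_sub_epsP_mul_sub_half (D : ℕ) {α : ℝ} (hα : 0 < α) (ϵ : ℝ) :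
    1 - epsP D α ϵ * ((D : ℝ) + 1) / 2 - ϵ / 2 = zetaP α ϵ := by
  have : (D : ℝ) + 1 ≠ 0 := by positivity
  simp only [epsP, zetaP]
  field_simp
  ring

lemma one_sub_half_sub_epsP_mul (D : ℕ) {α r : ℝ} (hα : 0 < α) (hr : r ≠ 0) (ϵ : ℝ) :
    1 - ϵ / 2 - epsP D α ϵ * ((D : ℝ) / rprime r + 1 / r) =
      zetaP α ϵ + epsP D α ϵ * (((D : ℝ) - 1) * (2 - r) / (2 * r)) := by
  rw [← one_sub_epsP_mul_sub_half D hα ϵ, div_eq_mul_inv _ (rprime r), inv_rprime]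
  field_simp
  ring

lemma elow_nonneg {D : ℕ} {α p r : ℝ} (hD : 1 ≤ D) (hα : 0 ≤ α) (hr : 1 ≤ r) (hrp : r ≤ p)
    (hp : p ≤ 2) : 0 ≤ elow D α p r := by
  have hD' : (0 : ℝ) ≤ (D : ℝ) - 1 := sub_nonneg.2 (by exact_mod_cast hD)
  have h2p : 0 ≤ 2 - p := by linarith
  have hr1 : 0 ≤ r - 1 := by linarith
  have hpr : 0 ≤ p - r := by linarith
  unfold elow
  positivity

lemma lt_zetaP_mul_of_elow_lt {D : ℕ} {α p r ϵ : ℝ} (hD : 1 ≤ D) (hα : 0 < α) (hr : 1 ≤ r)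
    (hrp : r < p) (hp : p ≤ 2) (hϵ : elow D α p r < ϵ) :
    (1 - p / 2) * (epsP D α ϵ * ((D : ℝ) - 1) / rprime r) < zetaP α ϵ * (p / r - 1) := by
  have hD' : (0 : ℝ) ≤ (D : ℝ) - 1 := sub_nonneg.2 (by exact_mod_cast hD)
  have h2p : 0 ≤ 2 - p := by linarith
  have hr1 : 0 ≤ r - 1 := by linarith
  have hpr : 0 < p - r := by linarith
  have hden : 0 < 2 * α * ((D : ℝ) + 1) * (p - r) +
      (2 + 3 * α) * (2 - p) * ((D : ℝ) - 1) * (r - 1) := by positivity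
  have hgap := (div_lt_iff₀ hden).1 hϵ
  have hr0 : r ≠ 0 := by positivity
  rw [← sub_pos]
  have key : zetaP α ϵ * (p / r - 1) - (1 - p / 2) * (epsP D α ϵ * ((D : ℝ) - 1) / rprime r) =
      (ϵ * (2 * α * ((D : ℝ) + 1) * (p - r) + (2 + 3 * α) * (2 - p) * ((D : ℝ) - 1) * (r - 1)) -
        (4 + 2 * α) * (2 - p) * ((D : ℝ) - 1) * (r - 1)) / (2 * r * (2 + α) * ((D : ℝ) + 1)) := by
    simp only [zetaP, epsP, div_eq_mul_inv _ (rprime r), inv_rprime]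
    field_simp
    ring
  rw [key]
  exact div_pos (by linarith) (by positivity)

lemma half_lt_epsP_mul_of_lt_ebar1 (D : ℕ) {α r ϵ : ℝ} (hα : 0 < α) (hr : 0 < r)
    (hq : 0 < (D : ℝ) - 1 - ((D : ℝ) - 2) * r) (hϵ : ϵ < ebar1 D α r) :
    0 < epsP D α ϵ * (1 - ((D : ℝ) - 1) / rprime r) - ϵ / 2 := by
  rw [ebar1] at hϵ
  set q := (D : ℝ) - 1 - ((D : ℝ) - 2) * r
  have hden : 0 < (4 + 6 * α) * q + (2 + α) * ((D : ℝ) + 1) * r := by positivity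
  rw [show 4 + 6 * α + (2 + α) * ((D : ℝ) + 1) * r / q =
      ((4 + 6 * α) * q + (2 + α) * ((D : ℝ) + 1) * r) / q by field_simp,
    div_div_eq_mul_div, lt_div_iff₀ hden] at hϵ
  have key : epsP D α ϵ * (1 - ((D : ℝ) - 1) / rprime r) - ϵ / 2 =
      ((8 + 4 * α) * q - ϵ * ((4 + 6 * α) * q + (2 + α) * ((D : ℝ) + 1) * r)) /
        (r * ((D : ℝ) + 1) * (4 + 2 * α)) := by
    rw [one_sub_div_rprime D hr.ne', epsP]
    field_simp
    ring
  rw [key]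
  exact div_pos (by linarith) (by positivity)

lemma one_sub_mul_sub_div_rprime_pos_of_lt_ebar2 (D k : ℕ) {r ϵ : ℝ} (hr : 0 < r)
    (hϵ : ϵ < ebar2 D k r) : 0 < 1 - ϵ * ((D : ℝ) + ((k : ℝ) + 1) / 2) - (D : ℝ) / rprime r := by
  rw [ebar2, lt_div_iff₀ (by positivity)] at hϵ
  have key : 1 - ϵ * ((D : ℝ) + ((k : ℝ) + 1) / 2) - (D : ℝ) / rprime r =
      ((D : ℝ) - ((D : ℝ) - 1) * r - ϵ * (((D : ℝ) + ((k : ℝ) + 1) / 2) * r)) / r := by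
    rw [div_eq_mul_inv _ (rprime r), inv_rprime]
    field_simp
    ring
  rw [key]
  exact div_pos (by linarith) hr

lemma one_sub_half_sub_epsP_mul_pos {D : ℕ} {α r ϵ : ℝ} (hD : 1 ≤ D) (hα : 0 < α) (hr : 0 < r)
    (hr2 : r ≤ 2) (hζ : 0 < zetaP α ϵ) (hε : 0 ≤ epsP D α ϵ) :
    0 < 1 - ϵ / 2 - epsP D α ϵ * ((D : ℝ) / rprime r + 1 / r) := by
  have hD' : (0 : ℝ) ≤ (D : ℝ) - 1 := sub_nonneg.2 (by exact_mod_cast hD)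
  have h2r : 0 ≤ 2 - r := by linarith
  rw [one_sub_half_sub_epsP_mul D hα hr.ne']
  positivity

lemma zetaP_sub_sigmaP_mul_pos_of_elow_lt {D : ℕ} {α p r ϵ : ℝ} (hD : 1 ≤ D) (hα : 0 < α) (hr : 1 < r)
    (hrp : r < p) (hp : p ≤ 2) (hϵ : elow D α p r < ϵ) :
    0 < zetaP α ϵ - sigmaP D α p r ϵ * (1 - p / 2) := by
  have hBC := BP_add_CP_pos hr hrp hp
  refine pos_of_mul_pos_right ?_ hBC.le
  rw [BP_add_CP_mul_sub D α ϵ hBC.ne']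
  exact sub_pos.2 (lt_zetaP_mul_of_elow_lt hD hα hr.le hrp hp hϵ)

theorem stmt17_general (D : ℕ) (hD : 2 ≤ D) (α p : ℝ) (hα : 0 < α)
    (hp2 : p < 2) (k : ℕ)
    (r₀ : ℝ) (hr₀ : r₀ ∈ Set.Ioo (1 : ℝ) (min p ((D : ℝ) / ((D : ℝ) - 1)))) :
    ∀ r ∈ Set.Ioo (1 : ℝ) r₀, ∀ ϵ ∈ Set.Ioo (elow D α p r) (ebar D α k r),
      0 < zetaP α ϵ ∧ 0 < epsP D α ϵ ∧ 0 < sigmaP D α p r ϵ ∧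
      0 < ϵ * α / 2 - zetaP α ϵ * α / 2 - sigmaP D α p r ϵ * (1 - p / 2) ∧
      0 < zetaP α ϵ - sigmaP D α p r ϵ * (1 - p / 2) ∧
      0 < 1 - epsP D α ϵ * ((D : ℝ) + 1) / 2 - ϵ / 2 -
          sigmaP D α p r ϵ * (1 - p / 2) ∧
      0 < sigmaP D α p r ϵ * (p / r - 1) - epsP D α ϵ * ((D : ℝ) - 1) / rprime r ∧
      0 < epsP D α ϵ * (1 - ((D : ℝ) - 1) / rprime r) - ϵ / 2 ∧
      0 < 1 - ϵ / 2 - epsP D α ϵ * ((D : ℝ) / rprime r + 1 / r) ∧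
      0 < 1 - ϵ * ((D : ℝ) + ((k : ℝ) + 1) / 2) - (D : ℝ) / rprime r := by
  rintro r ⟨hr1, hrr₀⟩ ϵ ⟨hlow, hup⟩
  have hD1 : 1 ≤ D := by omega
  have hrp : r < p := hrr₀.trans (hr₀.2.trans_le (min_le_left _ _))
  have hrD : ((D : ℝ) - 1) * r < D :=
    (lt_div_iff₀' (by norm_num; omega)).1 (hrr₀.trans (hr₀.2.trans_le (min_le_right _ _)))
  have hϵ : 0 < ϵ := (elow_nonneg hD1 hα.le hr1.le hrp.le hp2.le).trans_lt hlow
  have hr0 : 0 < r := by linarith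
  have hq : 0 < (D : ℝ) - 1 - ((D : ℝ) - 2) * r := by linarith
  have hv := half_lt_epsP_mul_of_lt_ebar1 D hα hr0 hq (hup.trans_le (min_le_left _ _))
  have hε : 0 < epsP D α ϵ := by
    rw [one_sub_div_rprime D hr0.ne'] at hv
    exact pos_of_mul_pos_left ((half_pos hϵ).trans (sub_pos.1 hv)) (div_pos hq hr0).le
  have hζ : 0 < zetaP α ϵ := by unfold zetaP; positivity
  have hBC := BP_add_CP_pos hr1 hrp hp2.le
  have hmargin := zetaP_sub_sigmaP_mul_pos_of_elow_lt hD1 hα hr1 hrp hp2.le hlow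
  refine ⟨hζ, hε, sigmaP_pos D hD1 hr1 hrp hp2.le hζ hε.le, ?_, hmargin, ?_, ?_, hv, ?_,
    one_sub_mul_sub_div_rprime_pos_of_lt_ebar2 D k hr0 (hup.trans_le (min_le_right _ _))⟩
  · rwa [mul_div_two_sub_zetaP_mul_div_two (by positivity)]
  · rwa [one_sub_epsP_mul_sub_half D hα]
  · rw [sigmaP_mul_CP_sub D α ϵ hBC.ne']
    exact mul_pos (div_pos (by linarith) (by linarith)) hmargin
  · exact one_sub_half_sub_epsP_mul_pos hD1 hα hr0 (by linarith) hζ hε.le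

/-- With `r₀` the unique solution of `ε̄(r₀) = ε̲(r₀)` in
`(1, min {p, D/(D-1)})`, for every `r ∈ (1, r₀)` and every `ϵ ∈ (ε̲(r), ε̄(r))`, the
parameters `ζ, ε, σ` are strictly positive and the seven quantities (i)–(vii) of the
parameter system are strictly positive. -/
theorem stmt17 (D : ℕ) (hD : 2 ≤ D) (α p : ℝ) (hα : 0 < α)
    (hp1 : 1 < p) (hp2 : p < 2) (k : ℕ)
    (r₀ : ℝ) (hr₀ : r₀ ∈ Set.Ioo (1 : ℝ) (min p ((D : ℝ) / ((D : ℝ) - 1))))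
    (hzero : ebar D α k r₀ = elow D α p r₀) :
    ∀ r ∈ Set.Ioo (1 : ℝ) r₀, ∀ ϵ ∈ Set.Ioo (elow D α p r) (ebar D α k r),
      0 < zetaP α ϵ ∧ 0 < epsP D α ϵ ∧ 0 < sigmaP D α p r ϵ ∧
      0 < ϵ * α / 2 - zetaP α ϵ * α / 2 - sigmaP D α p r ϵ * (1 - p / 2) ∧
      0 < zetaP α ϵ - sigmaP D α p r ϵ * (1 - p / 2) ∧
      0 < 1 - epsP D α ϵ * ((D : ℝ) + 1) / 2 - ϵ / 2 -
          sigmaP D α p r ϵ * (1 - p / 2) ∧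
      0 < sigmaP D α p r ϵ * (p / r - 1) - epsP D α ϵ * ((D : ℝ) - 1) / rprime r ∧
      0 < epsP D α ϵ * (1 - ((D : ℝ) - 1) / rprime r) - ϵ / 2 ∧
      0 < 1 - ϵ / 2 - epsP D α ϵ * ((D : ℝ) / rprime r + 1 / r) ∧
      0 < 1 - ϵ * ((D : ℝ) + ((k : ℝ) + 1) / 2) - (D : ℝ) / rprime r :=
  stmt17_general D hD α p hα hp2 k r₀ hr₀
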